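/- arXiv:1002.2291 — 3 statements merged into one kernel-verified Lean document; each statement's English description precedes it below -/
import Mathlib

section
/- For every integer k ≥ 1, the projection p : F_{k+1}^{k,k} → F_k^{k-1,k} given by (x_1,…,x_{k+1}) ↦ (x_1,…,x_k) is a well-defined locally trivial fibration with fiber homeomorphic to ℂ^k: for every point y of F_k^{k-1,k} there exist an open neighborhood U of y and a homeomorphism h : p^{-1}(U) → U × ℂ^k such that the first coordinate of h agrees with p. -/
noncomputable section

open Module Submodule

/-- Topology on the projectivization (quotient topology). -/
instance (K V : Type*) [DivisionRing K] [AddCommGroup V] [Module K V] [TopologicalSpace V] :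
    TopologicalSpace (Projectivization K V) :=
  inferInstanceAs (TopologicalSpace (Quotient (projectivizationSetoid K V)))

/-- The complex projective space `ℂP^n`. -/
abbrev CP (n : ℕ) := Projectivization ℂ (Fin (n + 1) → ℂ)

/-- `Fconf k i n` is the ordered configuration space `F_k^{i,n}` of `k` pairwise distinct
points of `ℂP^n` whose projective span has dimension `i` (i.e. the span of representative
vectors has linear dimension `i + 1`). -/
def Fconf (k i n : ℕ) : Set (Fin k → CP n) :=
  {x | Function.Injective x ∧
    finrank ℂ (span ℂ (Set.range fun j => (x j).rep)) = i + 1}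

/-! Near a configuration `y` of `k` independent points, fix for each point a coordinate in which
it is nonzero: normalising that coordinate to `1` gives continuous lifts `s_i(x)` of nearby
configurations `x`, and a vector `v₀` outside their span completes them to a matrix `R(x)` that is
invertible near `y` and depends continuously on `x`. A point `z` completes `x` to `k + 1`
independent points iff it lies off the hyperplane spanned by `x`, i.e. iff the `0`-th coordinate of
`z.rep` in the basis of rows of `R(x)` is nonzero; dividing the other coordinates by it is the fibre
coordinate in `ℂ^k`. Computing these coordinates with the adjugate of `R(x)` makes them visibly
continuous in `(x, z)`. -/

open Matrix Topology

section Configurations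

variable {m i n : ℕ}

theorem mem_Fconf_iff_linearIndependent (h : i + 1 = m) {x : Fin m → CP n} :
    x ∈ Fconf m i n ↔ LinearIndependent ℂ fun j => (x j).rep := by
  have hli := linearIndependent_iff_card_eq_finrank_span (R := ℂ) (b := fun j => (x j).rep)
  rw [Fintype.card_fin, Set.finrank] at hli
  rw [Fconf, Set.mem_ofPred_eq, hli, h]
  exact ⟨fun hx => hx.2.symm,
    fun hx => ⟨fun a b hab => (hli.2 hx).injective (congrArg Projectivization.rep hab),
      hx.symm⟩⟩

theorem mem_Fconf_succ_iff {w : Fin (m + 1) → CP n} :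
    w ∈ Fconf (m + 1) m n ↔
      (LinearIndependent ℂ fun j : Fin m => (w j.castSucc).rep) ∧
        (w (Fin.last m)).rep ∉ span ℂ (Set.range fun j : Fin m => (w j.castSucc).rep) := by
  rw [mem_Fconf_iff_linearIndependent rfl, ← linearIndependent_finSnoc]
  conv_lhs => rw [← Fin.snoc_init_self fun j => (w j).rep]
  rfl

def forgetLast (hm : 1 ≤ m) (w : Fconf (m + 1) m n) : Fconf m (m - 1) n :=
  ⟨w.1 ∘ Fin.castSucc,
    (mem_Fconf_iff_linearIndependent (Nat.sub_add_cancel hm)).2 (mem_Fconf_succ_iff.1 w.2).1⟩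

end Configurations

theorem Submodule.span_range_smul_of_ne_zero {ι K V : Type*} [Field K] [AddCommGroup V]
    [Module K V] {c : ι → K} (hc : ∀ i, c i ≠ 0) (w : ι → V) :
    span K (Set.range fun i => c i • w i) = span K (Set.range w) := by
  refine le_antisymm (span_le.2 ?_) (span_le.2 ?_) <;> rintro _ ⟨i, rfl⟩
  · exact smul_mem _ _ (subset_span ⟨i, rfl⟩)
  · have hmem : c i • w i ∈ span K (Set.range fun i => c i • w i) := subset_span ⟨i, rfl⟩
    simpa [smul_smul, hc i] using smul_mem _ (c i)⁻¹ hmem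

namespace Projectivization

variable (K V : Type*) [DivisionRing K] [AddCommGroup V] [Module K V] [TopologicalSpace V]

theorem isQuotientMap_mk :
    IsQuotientMap fun v : {v : V // v ≠ 0} => mk K v.1 v.2 :=
  isQuotientMap_quotient_mk'

variable {K V}

theorem _root_.Continuous.projectivizationMk {X : Type*} [TopologicalSpace X] {f : X → V}
    (hf : Continuous f) (hf0 : ∀ x, f x ≠ 0) : Continuous fun x => mk K (f x) (hf0 x) :=
  (isQuotientMap_mk K V).continuous.comp (hf.subtype_mk hf0)

end Projectivization

section ProjectiveSpace

variable {n : ℕ}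

theorem rep_mk_apply_ne_zero_iff {v : Fin (n + 1) → ℂ} (hv : v ≠ 0) (m : Fin (n + 1)) :
    (Projectivization.mk ℂ v hv).rep m ≠ 0 ↔ v m ≠ 0 := by
  obtain ⟨a, ha⟩ := Projectivization.exists_smul_eq_mk_rep ℂ v hv
  simp [← ha, Units.smul_def]

theorem isOpen_setOf_rep_apply_ne_zero (m : Fin (n + 1)) : IsOpen {z : CP n | z.rep m ≠ 0} := by
  refine (Projectivization.isQuotientMap_mk ℂ _).isOpen_preimage.1 ?_
  simp only [Set.preimage_ofPred_eq, rep_mk_apply_ne_zero_iff]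
  exact isOpen_ne_fun ((continuous_apply m).comp continuous_subtype_val) continuous_const

/-- Unlike `z.rep`, this normalised representative is continuous on the chart `z.rep m ≠ 0`. -/
def normRep (m : Fin (n + 1)) (z : CP n) : Fin (n + 1) → ℂ := (z.rep m)⁻¹ • z.rep

theorem normRep_mk (m : Fin (n + 1)) {v : Fin (n + 1) → ℂ} (hv : v ≠ 0) :
    normRep m (Projectivization.mk ℂ v hv) = (v m)⁻¹ • v := by
  obtain ⟨a, ha⟩ := Projectivization.exists_smul_eq_mk_rep ℂ v hv
  rw [normRep, ← ha]
  simp only [Units.smul_def, Pi.smul_apply, smul_eq_mul, mul_inv, smul_smul]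
  by_cases hvm : v m = 0
  · simp [hvm]
  · field_simp

theorem continuousOn_normRep (m : Fin (n + 1)) :
    ContinuousOn (normRep m) {z : CP n | z.rep m ≠ 0} := by
  rw [(Projectivization.isQuotientMap_mk ℂ _).continuousOn_isOpen_iff
    (isOpen_setOf_rep_apply_ne_zero m)]
  simp only [Function.comp_def, normRep_mk, Set.preimage_ofPred_eq, rep_mk_apply_ne_zero_iff]
  exact ((continuous_apply m).comp continuous_subtype_val).continuousOn.inv₀ (fun v hv => hv)
    |>.smul continuous_subtype_val.continuousOn

theorem span_range_normRep {ι : Type*} {x : ι → CP n} {j : ι → Fin (n + 1)}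
    (hx : ∀ i, (x i).rep (j i) ≠ 0) :
    span ℂ (Set.range fun i => normRep (j i) (x i)) = span ℂ (Set.range fun i => (x i).rep) :=
  span_range_smul_of_ne_zero (fun i => inv_ne_zero (hx i)) _

end ProjectiveSpace

section AffineCoordinates

variable {K : Type*} [Field K] {n : ℕ}

def dehomogenize (d : Fin (n + 1) → K) : Fin n → K := fun i => d i.succ / d 0

theorem dehomogenize_smul {a : K} (ha : a ≠ 0) (d : Fin (n + 1) → K) :
    dehomogenize (a • d) = dehomogenize d := by
  funext i
  simp only [dehomogenize, Pi.smul_apply, smul_eq_mul, mul_div_mul_left _ _ ha]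

@[simp]
theorem dehomogenize_cons_one (t : Fin n → K) :
    dehomogenize (Fin.cons 1 t : Fin (n + 1) → K) = t := by
  funext i
  simp [dehomogenize]

theorem cons_one_dehomogenize {d : Fin (n + 1) → K} (hd : d 0 ≠ 0) :
    (Fin.cons 1 (dehomogenize d) : Fin (n + 1) → K) = (d 0)⁻¹ • d := by
  refine funext fun l => Fin.cases ?_ (fun i => ?_) l
  · simp [inv_mul_cancel₀ hd]
  · simp [dehomogenize, div_eq_inv_mul]

theorem continuousOn_dehomogenize [TopologicalSpace K] [IsTopologicalDivisionRing K] :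
    ContinuousOn (dehomogenize (K := K) (n := n)) {d | d 0 ≠ 0} :=
  continuousOn_pi.2 fun i =>
    (continuous_apply i.succ).continuousOn.div (continuous_apply 0).continuousOn fun _ hd => hd

variable (R : Matrix (Fin (n + 1)) (Fin (n + 1)) K)

theorem vecMul_vecMul_adjugate (c : Fin (n + 1) → K) :
    c ᵥ* R ᵥ* R.adjugate = R.det • c := by
  rw [vecMul_vecMul, mul_adjugate, vecMul_smul, vecMul_one]

theorem vecMul_adjugate_vecMul (u : Fin (n + 1) → K) :
    u ᵥ* R.adjugate ᵥ* R = R.det • u := by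
  rw [vecMul_vecMul, adjugate_mul, vecMul_smul, vecMul_one]

theorem mem_span_rows_succ_iff (hR : R.det ≠ 0) (u : Fin (n + 1) → K) :
    u ∈ span K (Set.range fun i : Fin n => R i.succ) ↔ (u ᵥ* R.adjugate) 0 = 0 := by
  rw [mem_span_range_iff_exists_fun]
  constructor
  · rintro ⟨t, rfl⟩
    have hsum : ∑ i, t i • R i.succ = (Fin.cons 0 t : Fin (n + 1) → K) ᵥ* R := by
      simp [vecMul_eq_sum, Fin.sum_univ_succ]
    rw [hsum, vecMul_vecMul_adjugate]
    simp
  · intro h0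
    set c := R.det⁻¹ • (u ᵥ* R.adjugate)
    have hc : c ᵥ* R = u := by
      rw [smul_vecMul, vecMul_adjugate_vecMul, smul_smul, inv_mul_cancel₀ hR, one_smul]
    have hc0 : c 0 = 0 := by simp [c, h0]
    refine ⟨fun i => c i.succ, ?_⟩
    rwa [vecMul_eq_sum, Fin.sum_univ_succ, hc0, zero_smul, zero_add] at hc

theorem cons_one_vecMul_ne_zero (hR : R.det ≠ 0) (t : Fin n → K) :
    (Fin.cons 1 t : Fin (n + 1) → K) ᵥ* R ≠ 0 := by
  intro h
  have := congrFun (vecMul_vecMul_adjugate R (Fin.cons 1 t)) 0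
  simp only [h, zero_vecMul, Pi.zero_apply, Pi.smul_apply, Fin.cons_zero, smul_eq_mul,
    mul_one] at this
  exact hR this.symm

end AffineCoordinates

section AffineChart

variable {n : ℕ} (R : Matrix (Fin (n + 1)) (Fin (n + 1)) ℂ)

/-- Affine coordinates of `z` in the chart `{z | (z.rep ᵥ* R.adjugate) 0 ≠ 0}`; when `R` is
invertible these are the coordinates of `z` in the projective frame formed by the rows of `R`. -/
def affCoord (z : CP n) : Fin n → ℂ := dehomogenize (z.rep ᵥ* R.adjugate)

def affPoint (hR : R.det ≠ 0) (t : Fin n → ℂ) : CP n :=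
  Projectivization.mk ℂ (Fin.cons 1 t ᵥ* R) (cons_one_vecMul_ne_zero R hR t)

theorem exists_rep_affPoint_vecMul_adjugate (hR : R.det ≠ 0) (t : Fin n → ℂ) :
    ∃ a : ℂ, a ≠ 0 ∧ (affPoint R hR t).rep ᵥ* R.adjugate = a • Fin.cons 1 t := by
  obtain ⟨a, ha⟩ :=
    Projectivization.exists_smul_eq_mk_rep ℂ _ (cons_one_vecMul_ne_zero R hR t)
  refine ⟨a * R.det, mul_ne_zero a.ne_zero hR, ?_⟩
  rw [affPoint, ← ha, Units.smul_def, smul_vecMul, vecMul_vecMul_adjugate, smul_smul]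

theorem affCoord_affPoint (hR : R.det ≠ 0) (t : Fin n → ℂ) :
    affCoord R (affPoint R hR t) = t := by
  obtain ⟨a, ha0, ha⟩ := exists_rep_affPoint_vecMul_adjugate R hR t
  rw [affCoord, ha, dehomogenize_smul ha0, dehomogenize_cons_one]

theorem rep_affPoint_vecMul_adjugate_zero_ne_zero (hR : R.det ≠ 0) (t : Fin n → ℂ) :
    ((affPoint R hR t).rep ᵥ* R.adjugate) 0 ≠ 0 := by
  obtain ⟨a, ha0, ha⟩ := exists_rep_affPoint_vecMul_adjugate R hR t
  simpa [ha] using ha0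

theorem affPoint_affCoord (hR : R.det ≠ 0) {z : CP n} (hz : (z.rep ᵥ* R.adjugate) 0 ≠ 0) :
    affPoint R hR (affCoord R z) = z := by
  have hc : ((z.rep ᵥ* R.adjugate) 0)⁻¹ * R.det ≠ 0 := mul_ne_zero (inv_ne_zero hz) hR
  conv_rhs => rw [← z.mk_rep]
  simp only [affPoint, affCoord, cons_one_dehomogenize hz, smul_vecMul, vecMul_adjugate_vecMul,
    smul_smul]
  exact (Projectivization.mk_eq_mk_iff _ _ _ _ _).2 ⟨Units.mk0 _ hc, rfl⟩

theorem continuousOn_affCoord :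
    ContinuousOn (fun q : Matrix (Fin (n + 1)) (Fin (n + 1)) ℂ × CP n => affCoord q.1 q.2)
      {q | (q.2.rep ᵥ* q.1.adjugate) 0 ≠ 0} := by
  refine continuousOn_of_locally_continuousOn fun q _ => ?_
  obtain ⟨m, hm⟩ := Function.ne_iff.1 q.2.rep_nonzero
  refine ⟨Prod.snd ⁻¹' {z | z.rep m ≠ 0},
    (isOpen_setOf_rep_apply_ne_zero m).preimage continuous_snd, hm, ?_⟩
  -- on the chart `z.rep m ≠ 0`, the continuous `normRep m z` may replace `z.rep`
  have heq : Set.EqOn (fun q : Matrix (Fin (n + 1)) (Fin (n + 1)) ℂ × CP n =>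
      dehomogenize (normRep m q.2 ᵥ* q.1.adjugate)) (fun q => affCoord q.1 q.2)
      ({q | (q.2.rep ᵥ* q.1.adjugate) 0 ≠ 0} ∩ Prod.snd ⁻¹' {z | z.rep m ≠ 0}) := by
    rintro q ⟨-, hq⟩
    simp only [affCoord, normRep, smul_vecMul, dehomogenize_smul (inv_ne_zero hq)]
  have hvecMul : Continuous
      fun p : (Fin (n + 1) → ℂ) × Matrix (Fin (n + 1)) (Fin (n + 1)) ℂ => p.1 ᵥ* p.2 :=
    continuous_fst.matrix_vecMul continuous_snd
  have hpair : ContinuousOn (fun q : Matrix (Fin (n + 1)) (Fin (n + 1)) ℂ × CP n =>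
      (normRep m q.2, q.1.adjugate)) (Prod.snd ⁻¹' {z | z.rep m ≠ 0}) :=
    ((continuousOn_normRep m).comp continuous_snd.continuousOn fun _ hq => hq).prodMk
      (continuous_fst.matrix_adjugate).continuousOn
  refine ContinuousOn.congr (continuousOn_dehomogenize.comp
    ((hvecMul.comp_continuousOn hpair).mono Set.inter_subset_right) ?_) heq.symm
  rintro q ⟨hq0, hq⟩
  simp only [Function.comp_apply, Set.mem_ofPred_eq, normRep, smul_vecMul, Pi.smul_apply,
    smul_eq_mul]
  exact mul_ne_zero (inv_ne_zero hq) hq0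

end AffineChart

section Frame

variable {n : ℕ} (v₀ : Fin (n + 1) → ℂ) (j : Fin n → Fin (n + 1))

def frame (x : Fin n → CP n) : Matrix (Fin (n + 1)) (Fin (n + 1)) ℂ :=
  Matrix.of (Fin.cons v₀ fun i => normRep (j i) (x i))

def frameDomain : Set (Fin n → CP n) :=
  {x | (∀ i, (x i).rep (j i) ≠ 0) ∧ (frame v₀ j x).det ≠ 0}

theorem continuousOn_frame : ContinuousOn (frame v₀ j) {x | ∀ i, (x i).rep (j i) ≠ 0} := by
  refine continuousOn_pi.2 fun l => ?_
  refine Fin.cases continuousOn_const (fun i => ?_) l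
  exact (continuousOn_normRep (j i)).comp (continuous_apply i).continuousOn fun x hx => hx i

theorem isOpen_frameDomain : IsOpen (frameDomain v₀ j) := by
  have hchart : IsOpen {x : Fin n → CP n | ∀ i, (x i).rep (j i) ≠ 0} := by
    simp only [Set.ofPred_forall]
    exact isOpen_iInter_of_finite fun i =>
      (isOpen_setOf_rep_apply_ne_zero (j i)).preimage (continuous_apply (A := fun _ => CP n) i)
  have hdet := continuous_id.matrix_det.comp_continuousOn (continuousOn_frame v₀ j)
  exact hdet.isOpen_inter_preimage hchart isOpen_compl_singleton

theorem mem_span_iff_vecMul_adjugate_frame {x : Fin n → CP n} (hx : x ∈ frameDomain v₀ j)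
    (u : Fin (n + 1) → ℂ) :
    u ∈ span ℂ (Set.range fun i => (x i).rep) ↔ (u ᵥ* (frame v₀ j x).adjugate) 0 = 0 := by
  rw [← span_range_normRep hx.1]
  exact mem_span_rows_succ_iff _ hx.2 u

theorem exists_mem_frameDomain {x : Fin n → CP n}
    (hx : LinearIndependent ℂ fun i => (x i).rep) : ∃ v₀ j, x ∈ frameDomain v₀ j := by
  choose j hj using fun i => Function.ne_iff.1 (x i).rep_nonzero
  have hnorm : LinearIndependent ℂ fun i => normRep (j i) (x i) :=
    hx.units_smul fun i => Units.mk0 _ (inv_ne_zero (hj i))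
  obtain ⟨v₀, hv₀⟩ := exists_linearIndependent_cons_of_lt_finrank hnorm (by simp)
  refine ⟨v₀, j, hj, ?_⟩
  rw [← isUnit_iff_ne_zero, ← Matrix.isUnit_iff_isUnit_det,
    ← Matrix.linearIndependent_rows_iff_isUnit]
  exact hv₀

end Frame

section Trivialization

variable {n : ℕ} (v₀ : Fin (n + 1) → ℂ) (j : Fin n → Fin (n + 1))

theorem rep_last_vecMul_adjugate_frame_ne_zero {w : Fin (n + 1) → CP n}
    (hw : w ∈ Fconf (n + 1) n n) (hx : w ∘ Fin.castSucc ∈ frameDomain v₀ j) :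
    ((w (Fin.last n)).rep ᵥ* (frame v₀ j (w ∘ Fin.castSucc)).adjugate) 0 ≠ 0 :=
  (mem_span_iff_vecMul_adjugate_frame v₀ j hx _).not.1 (mem_Fconf_succ_iff.1 hw).2

theorem snoc_affPoint_mem_Fconf {x : Fin n → CP n}
    (hli : LinearIndependent ℂ fun i => (x i).rep) (hx : x ∈ frameDomain v₀ j)
    (t : Fin n → ℂ) :
    Fin.snoc x (affPoint (frame v₀ j x) hx.2 t) ∈ Fconf (n + 1) n n := by
  rw [mem_Fconf_succ_iff]
  simp only [Fin.snoc_castSucc, Fin.snoc_last]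
  exact ⟨hli, (mem_span_iff_vecMul_adjugate_frame v₀ j hx _).not.2
    (rep_affPoint_vecMul_adjugate_zero_ne_zero _ hx.2 t)⟩

variable (hn : 1 ≤ n)

abbrev frameNbhd : Set (Fconf n (n - 1) n) := Subtype.val ⁻¹' frameDomain v₀ j

def forgetChart (w : forgetLast hn ⁻¹' frameNbhd v₀ j) : frameNbhd v₀ j × (Fin n → ℂ) :=
  (⟨forgetLast hn w, w.2⟩,
    affCoord (frame v₀ j (forgetLast hn w).1) (w.1.1 (Fin.last n)))

def forgetChartInv (q : frameNbhd v₀ j × (Fin n → ℂ)) :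
    forgetLast hn ⁻¹' frameNbhd v₀ j :=
  ⟨⟨Fin.snoc q.1.1.1 (affPoint (frame v₀ j q.1.1.1) q.1.2.2 q.2),
      snoc_affPoint_mem_Fconf v₀ j
        ((mem_Fconf_iff_linearIndependent (Nat.sub_add_cancel hn)).1 q.1.1.2) q.1.2 q.2⟩,
    by simp [forgetLast, Fin.snoc_comp_castSucc]⟩

theorem forgetChartInv_forgetChart (w : forgetLast hn ⁻¹' frameNbhd v₀ j) :
    forgetChartInv v₀ j hn (forgetChart v₀ j hn w) = w := by
  refine Subtype.ext (Subtype.ext ?_)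
  calc Fin.snoc (Fin.init w.1.1) (affPoint (frame v₀ j (Fin.init w.1.1)) w.2.2
          (affCoord (frame v₀ j (Fin.init w.1.1)) (w.1.1 (Fin.last n))))
      _ = Fin.snoc (Fin.init w.1.1) (w.1.1 (Fin.last n)) :=
        congrArg _ (affPoint_affCoord _ _ (rep_last_vecMul_adjugate_frame_ne_zero v₀ j w.1.2 w.2))
      _ = w.1.1 := Fin.snoc_init_self _

theorem forgetChart_forgetChartInv (q : frameNbhd v₀ j × (Fin n → ℂ)) :
    forgetChart v₀ j hn (forgetChartInv v₀ j hn q) = q := by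
  ext1
  · exact Subtype.ext (Subtype.ext Fin.snoc_comp_castSucc)
  · simp only [forgetChart, forgetChartInv, forgetLast, Fin.snoc_comp_castSucc,
      Fin.snoc_last]
    exact affCoord_affPoint _ _ _

theorem continuous_forgetChart : Continuous (forgetChart v₀ j hn) := by
  have hval : Continuous fun w : forgetLast hn ⁻¹' frameNbhd v₀ j => w.1.1 :=
    continuous_subtype_val.comp continuous_subtype_val
  have hinit : Continuous fun w : forgetLast hn ⁻¹' frameNbhd v₀ j => w.1.1 ∘ Fin.castSucc :=
    continuous_pi fun i => (continuous_apply _).comp hval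
  have hbase : Continuous fun w : forgetLast hn ⁻¹' frameNbhd v₀ j =>
      (⟨forgetLast hn w, w.2⟩ : frameNbhd v₀ j) :=
    (hinit.subtype_mk _).subtype_mk _
  have hframe : Continuous fun w : forgetLast hn ⁻¹' frameNbhd v₀ j =>
      frame v₀ j (w.1.1 ∘ Fin.castSucc) :=
    (continuousOn_frame v₀ j).comp_continuous hinit fun w => w.2.1
  have hlast : Continuous fun w : forgetLast hn ⁻¹' frameNbhd v₀ j => w.1.1 (Fin.last n) :=
    (continuous_apply _).comp hval
  have hmem : ∀ w : forgetLast hn ⁻¹' frameNbhd v₀ j,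
      (frame v₀ j (w.1.1 ∘ Fin.castSucc), w.1.1 (Fin.last n)) ∈
        {q : Matrix (Fin (n + 1)) (Fin (n + 1)) ℂ × CP n |
          (q.2.rep ᵥ* q.1.adjugate) 0 ≠ 0} :=
    fun w => rep_last_vecMul_adjugate_frame_ne_zero v₀ j w.1.2 w.2
  have hcoord := (continuousOn_affCoord (n := n)).comp_continuous (hframe.prodMk hlast) hmem
  exact hbase.prodMk hcoord

theorem continuous_forgetChartInv : Continuous (forgetChartInv v₀ j hn) := by
  have hbase : Continuous fun q : frameNbhd v₀ j × (Fin n → ℂ) => q.1.1.1 :=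
    continuous_subtype_val.comp (continuous_subtype_val.comp continuous_fst)
  have hframe : Continuous fun q : frameNbhd v₀ j × (Fin n → ℂ) => frame v₀ j q.1.1.1 :=
    (continuousOn_frame v₀ j).comp_continuous hbase fun q => q.1.2.1
  have hcons : Continuous fun q : frameNbhd v₀ j × (Fin n → ℂ) =>
      (Fin.cons 1 q.2 : Fin (n + 1) → ℂ) :=
    continuous_const.finCons continuous_snd
  have hlast := (hcons.matrix_vecMul hframe).projectivizationMk (K := ℂ)
    fun q => cons_one_vecMul_ne_zero _ q.1.2.2 q.2
  exact ((hbase.finSnoc hlast).subtype_mk _).subtype_mk _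

def forgetTrivialization :
    forgetLast hn ⁻¹' frameNbhd v₀ j ≃ₜ frameNbhd v₀ j × (Fin n → ℂ) where
  toFun := forgetChart v₀ j hn
  invFun := forgetChartInv v₀ j hn
  left_inv := forgetChartInv_forgetChart v₀ j hn
  right_inv := forgetChart_forgetChartInv v₀ j hn
  continuous_toFun := continuous_forgetChart v₀ j hn
  continuous_invFun := continuous_forgetChartInv v₀ j hn

end Trivialization

/-- For `k ≥ 1`, forgetting the last point gives a well-defined map
`p : F_{k+1}^{k,k} → F_k^{k-1,k}` which is a locally trivial fibration with fiber `ℂ^k`: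
every point of the base has an open neighborhood `U` together with a homeomorphism
`p⁻¹(U) ≃ U × ℂ^k` whose first coordinate is `p`. -/
theorem Fconf_forget_locally_trivial (k : ℕ) (hk : 1 ≤ k) :
    ∃ p : Fconf (k + 1) k k → Fconf k (k - 1) k,
      (∀ x : Fconf (k + 1) k k,
        (p x : Fin k → CP k) = (x : Fin (k + 1) → CP k) ∘ Fin.castSucc) ∧
      ∀ y : Fconf k (k - 1) k, ∃ U : Set (Fconf k (k - 1) k), IsOpen U ∧ y ∈ U ∧
        ∃ h : (p ⁻¹' U) ≃ₜ U × (Fin k → ℂ),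
          ∀ z : p ⁻¹' U, ((h z).1 : Fconf k (k - 1) k) = p z := by
  refine ⟨forgetLast hk, fun _ => rfl, fun y => ?_⟩
  obtain ⟨v₀, j, hy⟩ :=
    exists_mem_frameDomain ((mem_Fconf_iff_linearIndependent (Nat.sub_add_cancel hk)).1 y.2)
  exact ⟨frameNbhd v₀ j, (isOpen_frameDomain v₀ j).preimage continuous_subtype_val, hy,
    forgetTrivialization v₀ j hk, fun _ => rfl⟩
end
end

section
/- Let p : B → C be a continuous map of topological spaces such that: C is nonempty and path-connected; for every c ∈ C the fiber p^{-1}(c) is nonempty and path-connected; and every c ∈ C admits an open neighborhood W and a continuous map s : W → B with p(s(w)) = w for all w ∈ W. Then B is path-connected. -/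
/-!
Fix `b₁ b₂ : B` and a path `γ` in `C` from `p b₁` to `p b₂`. The set `S` of points of `C` over
which the fiber meets the path component of `b₁` is carried along any path inside the domain `W`
of a local section `s`: a path-connected fiber joins its points to the value of `s`, and `s` lifts
the path. Hence `t ↦ γ t ∈ S` is locally constant on the (locally path-connected) unit interval,
so `p b₂ ∈ S`, and path-connectedness of the fiber over `p b₂` finishes the proof.
-/

open Topology

section

variable {B C : Type*} [TopologicalSpace B] [TopologicalSpace C]

theorem isLocallyConstant_mem_of_joinedIn_imp {X : Type*} [TopologicalSpace X]
    [LocallyPathConnectedSpace X] {f : X → C} (hf : Continuous f) {S : Set C}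
    (hS : ∀ c, ∃ W ∈ 𝓝 c, ∀ c₁ c₂, JoinedIn W c₁ c₂ → c₁ ∈ S → c₂ ∈ S) :
    IsLocallyConstant fun x => f x ∈ S := by
  rw [IsLocallyConstant.iff_eventually_eq]
  intro x
  obtain ⟨W, hW, hWS⟩ := hS (f x)
  filter_upwards [pathComponentIn_mem_nhds (hf.continuousAt hW)] with y hy
  have hxy : JoinedIn W (f x) (f y) := (hy.map hf).mono (Set.image_preimage_subset f W)
  exact propext ⟨hWS _ _ hxy.symm, hWS _ _ hxy⟩

theorem mem_image_pathComponent_of_joinedIn {p : B → C}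
    (hfib : ∀ c : C, IsPathConnected (p ⁻¹' {c})) {W : Set C} {s : W → B} (hs : Continuous s)
    (hps : ∀ w : W, p (s w) = w) {b : B} {c₁ c₂ : C} (h : JoinedIn W c₁ c₂)
    (h₁ : c₁ ∈ p '' pathComponent b) : c₂ ∈ p '' pathComponent b := by
  obtain ⟨b₁, hb₁, rfl⟩ := h₁
  have hfiber : Joined b₁ (s ⟨p b₁, h.mem.1⟩) :=
    ((hfib (p b₁)).joinedIn b₁ rfl _ (hps _)).joined
  have hlift : Joined (s ⟨p b₁, h.mem.1⟩) (s ⟨c₂, h.mem.2⟩) := h.joined_subtype.map hs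
  exact ⟨_, hb₁.trans (hfiber.trans hlift), hps _⟩

end

theorem pathConnected_of_local_sections_general {B C : Type*} [TopologicalSpace B]
    [TopologicalSpace C] (p : B → C)
    (hC : PathConnectedSpace C)
    (hfib : ∀ c : C, IsPathConnected (p ⁻¹' {c}))
    (hsec : ∀ c : C, ∃ W : Set C, IsOpen W ∧ c ∈ W ∧
      ∃ s : W → B, Continuous s ∧ ∀ w : W, p (s w) = w) :
    PathConnectedSpace B := by
  obtain ⟨c⟩ := hC.nonempty
  obtain ⟨b₀, -⟩ := (hfib c).nonempty
  refine ⟨⟨b₀⟩, fun b₁ b₂ => ?_⟩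
  obtain ⟨γ⟩ := hC.joined (p b₁) (p b₂)
  have : LocallyPathConnectedSpace unitInterval :=
    (convex_Icc (0 : ℝ) 1).locallyPathConnectedSpace
  have hγ : IsLocallyConstant fun t => γ t ∈ p '' pathComponent b₁ :=
    isLocallyConstant_mem_of_joinedIn_imp γ.continuous fun c => by
      obtain ⟨W, hWo, hcW, s, hs, hps⟩ := hsec c
      exact ⟨W, hWo.mem_nhds hcW, fun _ _ => mem_image_pathComponent_of_joinedIn hfib hs hps⟩
  have hb₂ : p b₂ ∈ p '' pathComponent b₁ := by
    simpa using (hγ.apply_eq_of_preconnectedSpace 0 1).mp ⟨b₁, mem_pathComponent_self b₁, by simp⟩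
  obtain ⟨b, hb, hpb⟩ := hb₂
  exact hb.trans ((hfib (p b₂)).joinedIn b hpb b₂ rfl).joined

/-- If `p : B → C` is a continuous map onto a path-connected space `C` such that all fibers
are nonempty and path-connected, and every point of `C` has an open neighborhood on which
`p` admits a continuous section, then `B` is path-connected. -/
theorem pathConnected_of_local_sections {B C : Type*} [TopologicalSpace B]
    [TopologicalSpace C] (p : B → C) (hp : Continuous p)
    (hC : PathConnectedSpace C)
    (hfib : ∀ c : C, IsPathConnected (p ⁻¹' {c}))
    (hsec : ∀ c : C, ∃ W : Set C, IsOpen W ∧ c ∈ W ∧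
      ∃ s : W → B, Continuous s ∧ ∀ w : W, p (s w) = w) :
    PathConnectedSpace B :=
  pathConnected_of_local_sections_general p hC hfib hsec
end

section
/- Let k ≥ 1, n ≥ 1 and let A_1,…,A_p be nonempty subsets of {1,…,k} with |A_j| ≤ n + 1 for every j. Then the space F_k^{𝒜,n} of injective tuples (x_1,…,x_k) ∈ (ℂP^n)^k such that for every j the projective span of {x_i : i ∈ A_j} has dimension |A_j| − 1 is nonempty and path-connected. -/
noncomputable section

open Module Submodule

/-!
Lift configurations to tuples of nonzero vectors. The lifted space is cut out by finitely many
linear-independence conditions, and along the complex line `z ↦ (1 - z) • u + z • v` through a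
lift `u` each of them fails only at the roots of a determinant that equals `1` at `z = 0`. So any
two lifts `u`, `v` are joined by the image of a path from `0` to `1` in `ℂ` minus finitely many
points. Lifts exist by choosing points on the moment curve (Vandermonde), and the quotient map to
projective space carries the lifted space onto `F_k^{𝒜,n}`.
-/

open scoped LinearAlgebra.Projectivization

theorem Matrix.eval_charpolyRev_eq_det {R n : Type*} [CommRing R] [Fintype n] [DecidableEq n]
    (M : Matrix n n R) (z : R) : M.charpolyRev.eval z = (1 - z • M).det := by
  rw [Matrix.charpolyRev, ← Polynomial.coe_evalRingHom, RingHom.map_det]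
  congr 1
  ext i j
  rcases eq_or_ne i j with rfl | hij <;> simp [*] <;> ring

theorem LinearIndependent.exists_linearMap_apply_eq_single {K V ι : Type*} [DivisionRing K]
    [AddCommGroup V] [Module K V] [DecidableEq ι] [Finite ι] {u : ι → V}
    (hu : LinearIndependent K u) : ∃ π : V →ₗ[K] (ι → K), ∀ i, π (u i) = Pi.single i 1 := by
  obtain ⟨π, hπ⟩ := LinearMap.exists_extend (Basis.span hu).equivFun.toLinearMap
  refine ⟨π, fun i => ?_⟩
  have hπu := LinearMap.congr_fun hπ ⟨u i, subset_span (Set.mem_range_self i)⟩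
  simp only [LinearMap.coe_comp, Function.comp_apply, Submodule.subtype_apply] at hπu
  rw [hπu, ← Basis.span_apply hu]
  ext j
  simp [Pi.single_apply, Finsupp.single_apply, eq_comm]

theorem linearIndependent_pow_of_injective {K κ : Type*} [Field K] [Fintype κ] {N : ℕ}
    {t : κ → K} (ht : Function.Injective t) (hcard : Fintype.card κ ≤ N) :
    LinearIndependent K (fun i (m : Fin N) => t i ^ (m : ℕ)) := by
  let e := (Fintype.equivFin κ).symm
  rw [← linearIndependent_equiv e]
  refine LinearIndependent.of_comp (LinearMap.funLeft K K (Fin.castLE hcard)) ?_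
  exact Matrix.linearIndependent_rows_iff_isUnit.2 <| (Matrix.isUnit_iff_isUnit_det _).2 <|
    isUnit_iff_ne_zero.2 <| Matrix.det_vandermonde_ne_zero_iff.2 (ht.comp e.injective)

theorem finrank_span_image_eq_card_iff {K V ι : Type*} [DivisionRing K] [AddCommGroup V]
    [Module K V] (f : ι → V) (s : Finset ι) :
    finrank K (span K (f '' s)) = s.card ↔ LinearIndependent K (fun i : s => f i) := by
  rw [linearIndependent_iff_card_eq_finrank_span, Fintype.card_coe, Set.finrank,
    Set.image_eq_range, eq_comm]
  rfl

/-- A weak form of Zariski openness. -/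
def IsCofiniteOnLines (K : Type*) {E : Type*} [Ring K] [AddCommGroup E] [Module K E]
    (s : Set E) : Prop :=
  ∀ u ∈ s, ∀ v, {z : K | AffineMap.lineMap u v z ∉ s}.Finite

namespace IsCofiniteOnLines

variable {K E F : Type*} [Ring K] [AddCommGroup E] [Module K E] [AddCommGroup F] [Module K F]

theorem inter {s t : Set E} (hs : IsCofiniteOnLines K s) (ht : IsCofiniteOnLines K t) :
    IsCofiniteOnLines K (s ∩ t) := by
  intro u hu v
  refine ((hs u hu.1 v).union (ht u hu.2 v)).subset fun z hz => ?_
  exact not_and_or.1 hz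

theorem iInter {γ : Sort*} [Finite γ] {s : γ → Set E} (hs : ∀ c, IsCofiniteOnLines K (s c)) :
    IsCofiniteOnLines K (⋂ c, s c) := by
  intro u hu v
  refine (Set.finite_iUnion fun c => hs c u (Set.mem_iInter.1 hu c) v).subset fun z hz => ?_
  simpa using hz

theorem preimage {s : Set F} (hs : IsCofiniteOnLines K s) (f : E →ₗ[K] F) :
    IsCofiniteOnLines K (f ⁻¹' s) := by
  intro u hu v
  have hf : ∀ z : K, f (AffineMap.lineMap u v z) = AffineMap.lineMap (f u) (f v) z :=
    f.toAffineMap.apply_lineMap u v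
  simpa only [Set.mem_preimage, hf] using hs (f u) hu (f v)

end IsCofiniteOnLines

theorem IsCofiniteOnLines.isPathConnected {E : Type*} [AddCommGroup E] [Module ℂ E]
    [TopologicalSpace E] [IsTopologicalAddGroup E] [ContinuousSMul ℂ E] {s : Set E}
    (hs : IsCofiniteOnLines ℂ s) (hne : s.Nonempty) : IsPathConnected s := by
  refine isPathConnected_iff.2 ⟨hne, fun u hu v hv => ?_⟩
  have hgood : IsPathConnected {z : ℂ | AffineMap.lineMap u v z ∈ s} := by
    simpa [Set.compl_ofPred] using (hs u hu v).countable.isPathConnected_compl_of_one_lt_rank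
      (by simp [Complex.rank_real_complex])
  have hjoined := (hgood.joinedIn 0 (by simpa) 1 (by simpa)).map
    (AffineMap.lineMap_continuous (R := ℂ) (p := u) (q := v))
  simpa using hjoined.mono (Set.image_preimage_subset _ s)

theorem isCofiniteOnLines_setOf_linearIndependent (K : Type*) {V ι : Type*} [Field K]
    [AddCommGroup V] [Module K V] [Finite ι] :
    IsCofiniteOnLines K {u : ι → V | LinearIndependent K u} := by
  classical
  cases nonempty_fintype ι
  intro u hu v
  obtain ⟨π, hπ⟩ := hu.exists_linearMap_apply_eq_single
  set N : Matrix ι ι K := .of fun i j => π (u i - v i) j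
  -- `π` sends `u` to the standard basis, so `det (1 - z • N)`, i.e. `N.charpolyRev` at `z`,
  -- detects the independence of `lineMap u v z`.
  have hcoord : ∀ z : K,
      (Matrix.of fun i j => π (AffineMap.lineMap u v z i) j) = 1 - z • N := by
    intro z
    ext i j
    rcases eq_or_ne i j with rfl | hij
    · simp [N, AffineMap.lineMap_apply_module', hπ]
      ring
    · simp [N, AffineMap.lineMap_apply_module', hπ, hij]
  refine (Polynomial.finite_setOfPred_isRoot (p := N.charpolyRev) fun h => by
    simpa [h] using N.eval_charpolyRev).subset fun z hz => ?_
  by_contra hroot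
  apply hz
  have hunit : IsUnit (Matrix.of fun i j => π (AffineMap.lineMap u v z i) j) := by
    rw [hcoord, Matrix.isUnit_iff_isUnit_det, ← Matrix.eval_charpolyRev_eq_det]
    exact isUnit_iff_ne_zero.2 hroot
  exact (Matrix.linearIndependent_rows_iff_isUnit.2 hunit).of_comp π

theorem isCofiniteOnLines_setOf_linearIndependent_comp (K : Type*) {V ι κ : Type*} [Field K]
    [AddCommGroup V] [Module K V] [Finite κ] (e : κ → ι) :
    IsCofiniteOnLines K {w : ι → V | LinearIndependent K (w ∘ e)} :=
  (isCofiniteOnLines_setOf_linearIndependent K).preimage (LinearMap.funLeft K V e)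

/-- The vector lifts of the configurations in `F_k^{𝒜,n}`. -/
def independentLifts (K : Type*) {V ι ι' : Type*} [Semiring K] [AddCommMonoid V] [Module K V]
    (A : ι' → Finset ι) : Set (ι → V) :=
  {w | (∀ i, w i ≠ 0) ∧ Pairwise (fun i i' => LinearIndependent K ![w i, w i']) ∧
    ∀ j, LinearIndependent K (fun i : A j => w i)}

theorem isCofiniteOnLines_independentLifts (K : Type*) {V ι ι' : Type*} [Field K]
    [AddCommGroup V] [Module K V] [Finite ι] [Finite ι'] (A : ι' → Finset ι) :
    IsCofiniteOnLines K (independentLifts K A : Set (ι → V)) := by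
  have hset : (independentLifts K A : Set (ι → V)) =
      ((⋂ i, {w | LinearIndependent K (w ∘ fun _ : Unit => i)}) ∩
        ⋂ i, ⋂ i', ⋂ (_ : i ≠ i'), {w | LinearIndependent K (w ∘ ![i, i'])}) ∩
      ⋂ j, {w | LinearIndependent K (fun i : A j => w i)} := by
    ext w
    have hpair (i i' : ι) : w ∘ ![i, i'] = ![w i, w i'] := by
      ext b
      fin_cases b <;> rfl
    simp [independentLifts, Pairwise, hpair, and_assoc]
  rw [hset]
  open IsCofiniteOnLines in
  exact ((iInter fun i => isCofiniteOnLines_setOf_linearIndependent_comp K _).inter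
    (iInter fun i => iInter fun i' => iInter fun _ =>
      isCofiniteOnLines_setOf_linearIndependent_comp K _)).inter
    (iInter fun j => isCofiniteOnLines_setOf_linearIndependent_comp K ((↑) : A j → ι))

theorem pow_mem_independentLifts {K ι ι' : Type*} [Field K] {N : ℕ} {t : ι → K}
    (ht : Function.Injective t) (hN : 2 ≤ N) {A : ι' → Finset ι} (hA : ∀ j, (A j).card ≤ N) :
    (fun i (m : Fin N) => t i ^ (m : ℕ)) ∈ independentLifts K A := by
  refine ⟨fun i h => by simpa using congr_fun h ⟨0, by omega⟩, fun i i' hii' => ?_, fun j => ?_⟩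
  · have hpair := linearIndependent_pow_of_injective (N := N) (t := t ∘ ![i, i'])
      (ht.comp (injective_pair_iff_ne.2 hii')) (by simpa)
    convert hpair using 1
    ext b : 1
    fin_cases b <;> rfl
  · exact linearIndependent_pow_of_injective (ht.comp Subtype.val_injective)
      (by simpa using hA j)

namespace Projectivization

variable {K V ι ι' : Type*} [DivisionRing K] [AddCommGroup V] [Module K V]

theorem isPathConnected_setOf_rep_mem [TopologicalSpace V] {L : Set (ι → V)}
    (hL : IsPathConnected L) (hL0 : ∀ w ∈ L, ∀ i, w i ≠ 0)
    (hLrep : ∀ w (hw : w ∈ L), (fun i => (mk K (w i) (hL0 w hw i)).rep) ∈ L) :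
    IsPathConnected {x : ι → ℙ K V | (fun i => (x i).rep) ∈ L} := by
  let val : (ι → {v : V // v ≠ 0}) → ι → V := fun w i => w i
  have hval : Topology.IsInducing val := .piMap fun _ => .subtypeVal
  have hlift : IsPathConnected (val ⁻¹' L) := by
    rwa [hval.isPathConnected_iff, Set.image_preimage_eq_of_subset]
    exact fun w hw => ⟨fun i => ⟨w i, hL0 w hw i⟩, rfl⟩
  convert hlift.image (f := fun w i => mk' K (w i))
    (continuous_pi fun i => continuous_quotient_mk'.comp (continuous_apply i))
  ext x
  constructor
  · intro hx
    exact ⟨fun i => ⟨(x i).rep, rep_nonzero _⟩, hx, funext fun i => mk_rep (x i)⟩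
  · rintro ⟨w, hw, rfl⟩
    exact hLrep _ hw

variable {A : ι' → Finset ι}

theorem rep_mem_independentLifts_iff (x : ι → ℙ K V) :
    (fun i => (x i).rep) ∈ independentLifts K A ↔
      Function.Injective x ∧ ∀ j, Independent (fun i : A j => x i) := by
  simp only [independentLifts, Set.mem_ofPred_eq, rep_nonzero, ne_eq, not_false_eq_true,
    implies_true, true_and, linearIndependent_pair_iff_ne, independent_iff,
    Function.injective_iff_pairwise_ne, Function.comp_def]

theorem mk_rep_mem_independentLifts {w : ι → V} (hw : w ∈ independentLifts K A) :
    (fun i => (mk K (w i) (hw.1 i)).rep) ∈ independentLifts K A := by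
  refine (rep_mem_independentLifts_iff _).2
    ⟨fun i i' h => ?_, fun j => Independent.mk _ _ (hw.2.2 j)⟩
  by_contra hii'
  exact (independent_pair_iff_ne _ _).1
    ((independent_mk_iff_LinearIndependent (hw.1 i) (hw.1 i')).2 (hw.2.1 hii')) h

end Projectivization

open Module Submodule in
theorem Fconf_family_isPathConnected_general (k n p : ℕ) (hn : 1 ≤ n)
    (A : Fin p → Finset (Fin k))
    (hcard : ∀ j, (A j).card ≤ n + 1) :
    IsPathConnected {x : Fin k → CP n | Function.Injective x ∧
      ∀ j, finrank ℂ (span ℂ ((fun i => (x i).rep) '' ↑(A j))) = (A j).card} := by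
  have hmoment : (fun (i : Fin k) (m : Fin (n + 1)) => ((i : ℕ) : ℂ) ^ (m : ℕ)) ∈
      independentLifts ℂ A :=
    pow_mem_independentLifts (fun i i' h => Fin.ext (by exact_mod_cast h)) (by omega) hcard
  have hlifts : IsPathConnected (independentLifts ℂ A : Set (Fin k → Fin (n + 1) → ℂ)) :=
    (isCofiniteOnLines_independentLifts ℂ A).isPathConnected ⟨_, hmoment⟩
  convert Projectivization.isPathConnected_setOf_rep_mem hlifts (fun _ hw => hw.1)
    (fun _ hw => Projectivization.mk_rep_mem_independentLifts hw) using 3 with x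
  simp only [Projectivization.rep_mem_independentLifts_iff, Projectivization.independent_iff,
    finrank_span_image_eq_card_iff, Function.comp_def]

open Module Submodule in
/-- For `k, n ≥ 1` and nonempty subsets `A_1, …, A_p` of `{1, …, k}` of cardinality at most
`n + 1`, the space `F_k^{𝒜,n}` of injective tuples in `(ℂP^n)^k` such that for each `j` the
points indexed by `A_j` span a projective subspace of dimension `|A_j| - 1` is nonempty and
path-connected. -/
theorem Fconf_family_isPathConnected (k n p : ℕ) (hk : 1 ≤ k) (hn : 1 ≤ n)
    (A : Fin p → Finset (Fin k)) (hne : ∀ j, (A j).Nonempty)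
    (hcard : ∀ j, (A j).card ≤ n + 1) :
    IsPathConnected {x : Fin k → CP n | Function.Injective x ∧
      ∀ j, finrank ℂ (span ℂ ((fun i => (x i).rep) '' ↑(A j))) = (A j).card} :=
  Fconf_family_isPathConnected_general k n p hn A hcard
end
end
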